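/- arXiv:2506.13375 — 3 statements merged into one kernel-verified Lean document; each statement's English description precedes it below -/
import Mathlib

section
/- Let a(n,k) be the coefficient of x^k in F_n(x) = ∏_{i=0}^{n-1}(1 + x^{2^i} + x^{2^{i+1}}), and let ν(n) = Σ_k a(n,k)^2. Then the sequence ν satisfies ν(0) = 1, ν(1) = 3, and ν(n+2) = 5ν(n+1) − 2ν(n) for all n ≥ 0. -/
/-!
Since `F (n + 1) = (1 + X + X²) · F n (X²)`, splitting `F (n + 1)` into its even part
`expand 2 ((1 + X) F n)` and its odd part `X · expand 2 (F n)` shows that the sum of squares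
`ν n` of the coefficients and the lag-one autocorrelation `c n = ∑ₖ a(n,k) a(n,k+1)` satisfy
`ν (n + 1) = 3 ν n + 2 c n` and `c (n + 1) = 2 ν n + 2 c n`. The matrix `!![3, 2; 2, 2]` has
trace 5 and determinant 2, whence the recurrence by Cayley–Hamilton.
-/

open Finset

namespace Polynomial

section CoeffDot

variable {R : Type*} [CommSemiring R]

def coeffDot (f g : R[X]) : R := ∑ k ∈ f.support, f.coeff k * g.coeff k

theorem coeffDot_eq_sum_of_support_subset {f : R[X]} (g : R[X]) {s : Finset ℕ}
    (h : f.support ⊆ s) : coeffDot f g = ∑ k ∈ s, f.coeff k * g.coeff k :=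
  sum_subset h fun k _ hk => by rw [notMem_support_iff.mp hk, zero_mul]

theorem coeffDot_comm (f g : R[X]) : coeffDot f g = coeffDot g f := by
  rw [coeffDot_eq_sum_of_support_subset g subset_union_left,
    coeffDot_eq_sum_of_support_subset f (subset_union_right (s₁ := f.support))]
  exact sum_congr rfl fun _ _ => mul_comm _ _

theorem coeffDot_add_right (f g h : R[X]) :
    coeffDot f (g + h) = coeffDot f g + coeffDot f h := by
  simp only [coeffDot, coeff_add, mul_add, sum_add_distrib]

theorem coeffDot_add_left (f g h : R[X]) :
    coeffDot (f + g) h = coeffDot f h + coeffDot g h := by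
  simp only [coeffDot_comm _ h, coeffDot_add_right]

theorem support_X_mul_subset (f : R[X]) : (X * f).support ⊆ f.support.image (· + 1) := by
  intro k hk
  rw [mem_support_iff] at hk
  rcases k with _ | j
  · exact absurd (coeff_X_mul_zero f) hk
  · rw [coeff_X_mul] at hk
    exact mem_image_of_mem _ (mem_support_iff.mpr hk)

theorem coeffDot_X_mul_X_mul (f g : R[X]) : coeffDot (X * f) (X * g) = coeffDot f g := by
  rw [coeffDot_eq_sum_of_support_subset _ (support_X_mul_subset f),
    sum_image fun _ _ _ _ => Nat.succ_inj.mp]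
  simp only [coeff_X_mul, coeffDot]

theorem support_expand_subset {p : ℕ} (hp : 0 < p) (f : R[X]) :
    (expand R p f).support ⊆ f.support.image (· * p) := by
  intro k hk
  rw [mem_support_iff, coeff_expand hp] at hk
  split_ifs at hk with hpk
  · exact mem_image.mpr ⟨k / p, mem_support_iff.mpr hk, Nat.div_mul_cancel hpk⟩
  · exact absurd rfl hk

theorem coeffDot_expand_expand {p : ℕ} (hp : 0 < p) (f g : R[X]) :
    coeffDot (expand R p f) (expand R p g) = coeffDot f g := by
  rw [coeffDot_eq_sum_of_support_subset _ (support_expand_subset hp f),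
    sum_image fun _ _ _ _ => (Nat.mul_left_inj hp.ne').mp]
  simp only [coeff_expand_mul hp, coeffDot]

theorem coeffDot_X_mul_expand_expand {p : ℕ} (hp : 1 < p) (f g : R[X]) :
    coeffDot (X * expand R p f) (expand R p g) = 0 := by
  refine sum_eq_zero fun k _ => ?_
  rcases k with _ | j
  · rw [coeff_X_mul_zero, zero_mul]
  · rw [coeff_X_mul, coeff_expand (by omega), coeff_expand (by omega)]
    split_ifs with hj hj1
    · exact absurd ((Nat.dvd_add_right hj).mp hj1) (Nat.not_dvd_of_pos_of_lt one_pos hp)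
    all_goals simp only [zero_mul, mul_zero]

variable (p : R[X])

theorem one_add_X_add_X_sq_mul_expand :
    (1 + X + X ^ 2) * expand R 2 p = expand R 2 (p + X * p) + X * expand R 2 p := by
  simp only [map_add, map_mul, expand_X]
  ring

theorem coeffDot_self_one_add_X_add_X_sq_mul_expand :
    coeffDot ((1 + X + X ^ 2) * expand R 2 p) ((1 + X + X ^ 2) * expand R 2 p)
      = 3 * coeffDot p p + 2 * coeffDot (X * p) p := by
  rw [one_add_X_add_X_sq_mul_expand]
  simp only [coeffDot_add_left, coeffDot_add_right, coeffDot_expand_expand two_pos,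
    coeffDot_X_mul_expand_expand one_lt_two, coeffDot_comm (expand R 2 _) (X * _),
    coeffDot_X_mul_X_mul, coeffDot_comm p (X * p)]
  ring

theorem coeffDot_X_mul_one_add_X_add_X_sq_mul_expand :
    coeffDot (X * ((1 + X + X ^ 2) * expand R 2 p)) ((1 + X + X ^ 2) * expand R 2 p)
      = 2 * coeffDot p p + 2 * coeffDot (X * p) p := by
  have hX : X * ((1 + X + X ^ 2) * expand R 2 p)
      = X * expand R 2 (p + X * p) + expand R 2 (X * p) := by
    rw [one_add_X_add_X_sq_mul_expand, map_mul, expand_X]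
    ring
  rw [hX, one_add_X_add_X_sq_mul_expand]
  simp only [coeffDot_add_left, coeffDot_add_right, coeffDot_expand_expand two_pos,
    coeffDot_X_mul_expand_expand one_lt_two, coeffDot_comm (expand R 2 _) (X * _),
    coeffDot_X_mul_X_mul]
  ring

end CoeffDot

theorem prod_range_succ_eq_mul_expand {R : Type*} [CommSemiring R] (n : ℕ) :
    ∏ i ∈ range (n + 1), (1 + (X : R[X]) ^ (2 ^ i) + X ^ (2 ^ (i + 1)))
      = (1 + X + X ^ 2) * expand R 2 (∏ i ∈ range n, (1 + X ^ (2 ^ i) + X ^ (2 ^ (i + 1)))) := by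
  rw [prod_range_succ', mul_comm, map_prod]
  congr 1
  · simp
  · refine prod_congr rfl fun i _ => ?_
    simp only [map_add, map_one, map_pow, expand_X]
    ring

end Polynomial

open Polynomial in
theorem stmt_4 (F : ℕ → ℤ[X]) (ν : ℕ → ℤ)
    (hF : ∀ n, F n = ∏ i ∈ Finset.range n, (1 + (X : ℤ[X]) ^ (2 ^ i) + X ^ (2 ^ (i + 1))))
    (hν : ∀ n, ν n = ∑ k ∈ (F n).support, ((F n).coeff k) ^ 2) :
    ν 0 = 1 ∧ ν 1 = 3 ∧ ∀ n, ν (n + 2) = 5 * ν (n + 1) - 2 * ν n := by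
  have hν' (n : ℕ) : ν n = coeffDot (F n) (F n) := by simp only [hν, coeffDot, sq]
  have hF' (n : ℕ) : F (n + 1) = (1 + X + X ^ 2) * expand ℤ 2 (F n) := by
    rw [hF, hF, prod_range_succ_eq_mul_expand]
  have hν_succ (n : ℕ) : ν (n + 1) = 3 * ν n + 2 * coeffDot (X * F n) (F n) := by
    rw [hν', hν', hF', coeffDot_self_one_add_X_add_X_sq_mul_expand]
  have hc_succ (n : ℕ) : coeffDot (X * F (n + 1)) (F (n + 1))
      = 2 * ν n + 2 * coeffDot (X * F n) (F n) := by
    rw [hν', hF', coeffDot_X_mul_one_add_X_add_X_sq_mul_expand]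
  have hF0 : F 0 = 1 := by rw [hF, prod_range_zero]
  have hν0 : ν 0 = 1 := by rw [hν', hF0, ← C_1, coeffDot, support_C one_ne_zero]; simp
  have hc0 : coeffDot (X * F 0) (F 0) = 0 := by simp [hF0, coeffDot, coeff_one]
  refine ⟨hν0, by rw [hν_succ, hν0, hc0]; norm_num, fun n => ?_⟩
  linarith [hν_succ (n + 1), hc_succ n, hν_succ n]
end

section
/- For every n ≥ 0, ν(n+1) = 3ν(n) + 4ν¹(n) and ν¹(n+1) = ν(n) + 2ν¹(n), where ν(n) = CT_x F_n(x)F_n(x^{-1}) and ν¹(n) = CT_x F_n(x)F_n(x^{-1})x^{2^n}. -/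
/-!
Write `G n = F n(x) F n(x⁻¹)` and `y = x^(2^n)`. Since `F (n+1) = F n · (1 + y + y²)`,
`G (n+1) = G n · (1 + y + y²)(1 + y⁻¹ + y⁻²) = G n · (3 + 2(y + y⁻¹) + y² + y⁻²)`.
`G n` is symmetric under `x ↦ x⁻¹` and supported in `|k| ≤ 2y - 2`, so the coefficients of
`G (n+1)` at `0` and at `-2y` only see the coefficients of `G n` at `0` and `±y`,
i.e. `ν n` and `ν₁ n`.
-/

open LaurentPolynomial Finset

namespace LaurentPolynomial

variable {R : Type*}

lemma coeff_mul_T [Semiring R] (p : R[T;T⁻¹]) (t m : ℤ) :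
    (p * T t).coeff m = p.coeff (m - t) := by
  simpa [sub_eq_add_neg] using AddMonoidAlgebra.coeff_mul_single_apply p 1 t m

lemma support_mul_subset_Icc [Semiring R] {p q : R[T;T⁻¹]} {a b c d : ℤ}
    (hp : p.coeff.support ⊆ Icc a b) (hq : q.coeff.support ⊆ Icc c d) :
    (p * q).coeff.support ⊆ Icc (a + c) (b + d) :=
  (AddMonoidAlgebra.support_coeff_mul_subset p q).trans
    ((add_subset_add hp hq).trans (Icc_add_Icc_subset _ _ _ _))

lemma support_one_add_T_add_T_subset [Semiring R] {a b : ℤ} (ha : 0 ≤ a) (hab : a ≤ b) :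
    (1 + T a + T b : R[T;T⁻¹]).coeff.support ⊆ Icc 0 b := by
  intro k hk
  rw [Finsupp.mem_support_iff, AddMonoidAlgebra.coeff_add, AddMonoidAlgebra.coeff_add] at hk
  simp only [← T_zero, Finsupp.add_apply, T_apply] at hk
  simp only [mem_Icc]
  split_ifs at hk <;> simp_all <;> omega

lemma support_prod_one_add_T_two_pow_subset [CommSemiring R] (n : ℕ) :
    (∏ i ∈ range n, (1 + T (2 ^ i : ℕ) + T (2 ^ (i + 1) : ℕ)) : R[T;T⁻¹]).coeff.support ⊆
      Icc 0 (2 ^ (n + 1) - 2) := by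
  induction n with
  | zero =>
    rw [prod_range_zero, ← T_zero]
    exact Finsupp.support_single_subset.trans (by simp)
  | succ n ih =>
    rw [prod_range_succ]
    refine (support_mul_subset_Icc ih
      (support_one_add_T_add_T_subset (by positivity) (by gcongr <;> omega))).trans ?_
    push_cast
    exact Icc_subset_Icc le_rfl (le_of_eq (by ring))

section CommSemiring

variable [CommSemiring R]

lemma support_invert_subset_Icc {p : R[T;T⁻¹]} {a b : ℤ} (hp : p.coeff.support ⊆ Icc a b) :
    (invert p).coeff.support ⊆ Icc (-b) (-a) := by
  intro k hk
  have := hp (Finsupp.mem_support_iff.2 (by simpa using Finsupp.mem_support_iff.1 hk))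
  simp only [mem_Icc] at this ⊢
  omega

lemma invert_mul_self_invert (p : R[T;T⁻¹]) : invert (p * invert p) = p * invert p := by
  rw [map_mul, involutive_invert p, mul_comm]

lemma coeff_mul_self_invert_neg (p : R[T;T⁻¹]) (k : ℤ) :
    (p * invert p).coeff (-k) = (p * invert p).coeff k := by
  rw [← invert_apply, invert_mul_self_invert]

lemma coeff_mul_self_invert_eq_zero {p : R[T;T⁻¹]} {d k : ℤ}
    (hp : p.coeff.support ⊆ Icc 0 d) (hk : d < |k|) : (p * invert p).coeff k = 0 := by
  by_contra h
  have := support_mul_subset_Icc hp (support_invert_subset_Icc hp) (Finsupp.mem_support_iff.2 h)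
  rw [mem_Icc] at this
  rw [lt_abs] at hk
  omega

end CommSemiring

section CommRing

variable [CommRing R]

lemma one_add_T_add_T_mul_invert (a : ℤ) :
    (1 + T a + T (2 * a) : R[T;T⁻¹]) * invert (1 + T a + T (2 * a)) =
      3 + 2 * (T a + T (-a)) + (T (2 * a) + T (-(2 * a))) := by
  have hinv : (T a * T (-a) : R[T;T⁻¹]) = 1 := by rw [← T_add, add_neg_cancel, T_zero]
  simp only [two_mul, T_add, neg_add, map_add, map_mul, map_one, invert_T]
  linear_combination (T a * T (-a) + 2 + T a + T (-a) : R[T;T⁻¹]) * hinv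

lemma coeff_mul_trinomial_mul_invert (G : R[T;T⁻¹]) (a m : ℤ) :
    (G * ((1 + T a + T (2 * a)) * invert (1 + T a + T (2 * a)))).coeff m =
      3 * G.coeff m + 2 * (G.coeff (m - a) + G.coeff (m + a)) +
        G.coeff (m - 2 * a) + G.coeff (m + 2 * a) := by
  have hsmul : G * (3 + 2 * (T a + T (-a)) + (T (2 * a) + T (-(2 * a)))) =
      3 • G + 2 • (G * T a + G * T (-a)) + (G * T (2 * a) + G * T (-(2 * a))) := by
    simp only [nsmul_eq_mul]; push_cast; ring
  rw [one_add_T_add_T_mul_invert, hsmul]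
  simp only [AddMonoidAlgebra.coeff_add, AddMonoidAlgebra.coeff_smul, Finsupp.add_apply,
    Finsupp.smul_apply, coeff_mul_T, sub_neg_eq_add]
  simp only [nsmul_eq_mul]; push_cast; ring

end CommRing

end LaurentPolynomial

open LaurentPolynomial in
theorem stmt_8 (F : ℕ → LaurentPolynomial ℤ) (ν ν₁ : ℕ → ℤ)
    (hF : ∀ n, F n = ∏ i ∈ Finset.range n,
      (1 + T (2 ^ i : ℕ) + T (2 ^ (i + 1) : ℕ)))
    (hν : ∀ n, ν n = (F n * invert (F n)).coeff 0)
    (hν₁ : ∀ n, ν₁ n = ((F n * invert (F n) * T (2 ^ n : ℕ) : LaurentPolynomial ℤ)).coeff 0)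
    (n : ℕ) :
    ν (n + 1) = 3 * ν n + 4 * ν₁ n ∧ ν₁ (n + 1) = ν n + 2 * ν₁ n := by
  have hcast : ((2 ^ (n + 1) : ℕ) : ℤ) = 2 * (2 ^ n : ℕ) := by push_cast; ring
  have hsupp : (F n).coeff.support ⊆ Icc 0 (2 * (2 ^ n : ℕ) - 2) :=
    hF n ▸ hcast ▸ support_prod_one_add_T_two_pow_subset n
  have hFsucc : F (n + 1) = F n * (1 + T (2 ^ n : ℕ) + T (2 * (2 ^ n : ℕ))) := by
    rw [hF, prod_range_succ, ← hF, hcast]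
  rw [hν, hν, hν₁, hν₁, hcast, coeff_mul_T, coeff_mul_T, zero_sub, zero_sub, hFsucc, map_mul,
    mul_mul_mul_comm, coeff_mul_trinomial_mul_invert, coeff_mul_trinomial_mul_invert]
  have hpos : 0 < ((2 ^ n : ℕ) : ℤ) := by positivity
  generalize ((2 ^ n : ℕ) : ℤ) = a at *
  have hvanish : ∀ k, 2 * a ≤ k ∨ k ≤ -(2 * a) → (F n * invert (F n)).coeff k = 0 :=
    fun k hk ↦ coeff_mul_self_invert_eq_zero hsupp (by rw [lt_abs]; omega)
  simp (disch := omega) only [hvanish]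
  rw [zero_sub, zero_add, show -(2 * a) + a = -a by ring, show -(2 * a) + 2 * a = 0 by ring,
    coeff_mul_self_invert_neg]
  constructor <;> ring
end

section
/- Let M be the 2×2 integer matrix with rows (3,4) and (1,2), and let Γ(n) = M^n · (1,0)^t. Then the first component of Γ(n) equals ν(n), the sum of squares of the coefficients of F_n(x) = ∏_{i=0}^{n-1}(1 + x^{2^i} + x^{2^{i+1}}), for every n ≥ 0. -/
/-!
Every factor `1 + y + y²` (with `y = X ^ 2 ^ i`) is palindromic, hence so is `F_n`, of degree
`D_n = 2 ^ (n + 1) - 2`; consequently `ν(n) = ∑ c_k c_{D_n - k}` is the central coefficient of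
`F_n²`. Since `F_{n+1}² = F_n² (1 + 2y + 3y² + 2y³ + y⁴)` with `y = X ^ 2 ^ n`, the coefficients
of `F_{n+1}²` at `D_{n+1}` and `D_{n+1} + 2 ^ (n + 1)` are read off from those of `F_n²` at `D_n`
and `D_n + 2 ^ n`: the terms beyond the degree `2 D_n` vanish, and the symmetry of `F_n²` about
`D_n` identifies its coefficient at `D_n - 2 ^ n` with the one at `D_n + 2 ^ n`. The result is
multiplication by `M`.
-/

open Polynomial Finset
open scoped Matrix

namespace Polynomial

variable {R : Type*}

theorem coeff_sub_of_reflect_eq [Semiring R] {p : R[X]} {N i : ℕ} (hp : reflect N p = p)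
    (hi : i ≤ N) : p.coeff (N - i) = p.coeff i := by
  calc p.coeff (N - i) = (reflect N p).coeff (N - i) := by rw [hp]
    _ = p.coeff i := by rw [coeff_reflect, revAt_le (Nat.sub_le N i), Nat.sub_sub_self hi]

theorem sum_coeff_sq_eq_coeff_sq_of_reflect_eq [CommSemiring R] {p : R[X]} {N : ℕ}
    (hdeg : p.natDegree ≤ N) (hp : reflect N p = p) :
    ∑ k ∈ p.support, p.coeff k ^ 2 = (p ^ 2).coeff N := by
  calc ∑ k ∈ p.support, p.coeff k ^ 2 = ∑ k ∈ range (N + 1), p.coeff k ^ 2 :=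
        sum_over_range' p (f := fun _ c => c ^ 2) (fun _ => zero_pow two_ne_zero) (N + 1)
          (Nat.lt_succ_of_le hdeg)
    _ = ∑ k ∈ range (N + 1), p.coeff k * p.coeff (N - k) := by
        refine sum_congr rfl fun k hk => ?_
        rw [coeff_sub_of_reflect_eq hp (Nat.le_of_lt_succ (mem_range.mp hk)), sq]
    _ = (p ^ 2).coeff N := by
        rw [sq, coeff_mul,
          Nat.sum_antidiagonal_eq_sum_range_succ (fun i j => p.coeff i * p.coeff j)]

theorem reflect_one_add_X_pow_add_X_pow [Semiring R] (a : ℕ) :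
    reflect (2 * a) (1 + X ^ a + X ^ (2 * a) : R[X]) = 1 + X ^ a + X ^ (2 * a) := by
  rw [reflect_add, reflect_add, reflect_one, reflect_monomial, reflect_monomial,
    revAt_le (by omega), revAt_le le_rfl, Nat.sub_self, show 2 * a - a = a by omega, pow_zero]
  abel

theorem mul_one_add_X_pow_add_X_pow_sq [CommSemiring R] (H : R[X]) (a : ℕ) :
    H * (1 + X ^ a + X ^ (2 * a)) ^ 2 =
      H + 2 * (H * X ^ a) + 3 * (H * X ^ (2 * a)) + 2 * (H * X ^ (3 * a)) + H * X ^ (4 * a) := by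
  ring

theorem coeff_mul_one_add_X_pow_add_X_pow_sq [CommSemiring R] (H : R[X]) (a k : ℕ) :
    (H * (1 + X ^ a + X ^ (2 * a)) ^ 2).coeff k =
      H.coeff k + 2 * (if a ≤ k then H.coeff (k - a) else 0)
        + 3 * (if 2 * a ≤ k then H.coeff (k - 2 * a) else 0)
        + 2 * (if 3 * a ≤ k then H.coeff (k - 3 * a) else 0)
        + (if 4 * a ≤ k then H.coeff (k - 4 * a) else 0) := by
  simp only [mul_one_add_X_pow_add_X_pow_sq, coeff_add, coeff_ofNat_mul, coeff_mul_X_pow']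

theorem natDegree_one_add_X_pow_add_X_pow_le [Semiring R] (a : ℕ) :
    (1 + X ^ a + X ^ (2 * a) : R[X]).natDegree ≤ 2 * a := by
  compute_degree
  omega

variable [CommSemiring R] {H : R[X]} {D a : ℕ}

theorem coeff_mul_one_add_X_pow_add_X_pow_sq_of_reflect_eq (hdeg : H.natDegree ≤ D + D)
    (hH : reflect (D + D) H = H) (hDa : D + 2 = 2 * a) :
    (H * (1 + X ^ a + X ^ (2 * a)) ^ 2).coeff (D + 2 * a) =
      3 * H.coeff D + 4 * H.coeff (D + a) := by
  have hvanish : ∀ k, D + D < k → H.coeff k = 0 := fun k hk =>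
    coeff_eq_zero_of_natDegree_lt (hdeg.trans_lt hk)
  have hsymm :
      (if 3 * a ≤ D + 2 * a then H.coeff (D + 2 * a - 3 * a) else 0) = H.coeff (D + a) := by
    split_ifs with h
    · rw [← coeff_sub_of_reflect_eq hH (by omega : D + a ≤ D + D)]
      congr 1
      omega
    · rw [hvanish _ (by omega)]
  rw [coeff_mul_one_add_X_pow_add_X_pow_sq, hsymm, if_pos (by omega), if_pos (by omega),
    if_neg (by omega), hvanish _ (by omega), show D + 2 * a - a = D + a by omega,
    show D + 2 * a - 2 * a = D by omega]
  ring

theorem coeff_mul_one_add_X_pow_add_X_pow_sq_of_natDegree_le (hdeg : H.natDegree ≤ D + D)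
    (hDa : D + 2 = 2 * a) :
    (H * (1 + X ^ a + X ^ (2 * a)) ^ 2).coeff (D + 2 * a + 2 * a) =
      H.coeff D + 2 * H.coeff (D + a) := by
  have hvanish : ∀ k, D + D < k → H.coeff k = 0 := fun k hk =>
    coeff_eq_zero_of_natDegree_lt (hdeg.trans_lt hk)
  rw [coeff_mul_one_add_X_pow_add_X_pow_sq, if_pos (by omega), if_pos (by omega),
    if_pos (by omega), if_pos (by omega), hvanish _ (by omega), hvanish (_ - a) (by omega),
    hvanish (_ - 2 * a) (by omega),
    show D + 2 * a + 2 * a - 3 * a = D + a by omega, show D + 2 * a + 2 * a - 4 * a = D by omega]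
  ring

end Polynomial

theorem Matrix.pow_mulVec_of_mulVec_eq_succ {ι R : Type*} [Fintype ι] [DecidableEq ι]
    [Semiring R] {M : Matrix ι ι R} {x : ℕ → ι → R} (h : ∀ k, M *ᵥ x k = x (k + 1))
    (k : ℕ) : (M ^ k) *ᵥ x 0 = x k := by
  induction k with
  | zero => simp
  | succ k ih => rw [pow_succ', ← Matrix.mulVec_mulVec, ih, h]

noncomputable def trinomialProd (n : ℕ) : ℤ[X] :=
  ∏ i ∈ range n, (1 + X ^ (2 ^ i) + X ^ (2 ^ (i + 1)))

theorem trinomialProd_succ (n : ℕ) :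
    trinomialProd (n + 1) = trinomialProd n * (1 + X ^ (2 ^ n) + X ^ (2 * 2 ^ n)) := by
  rw [trinomialProd, prod_range_succ, pow_succ']
  rfl

theorem natDegree_trinomialProd_le (n : ℕ) : (trinomialProd n).natDegree ≤ 2 ^ (n + 1) - 2 := by
  induction n with
  | zero => simp [trinomialProd]
  | succ n ih =>
    rw [trinomialProd_succ]
    refine (natDegree_mul_le.trans
      (add_le_add ih (natDegree_one_add_X_pow_add_X_pow_le _))).trans_eq ?_
    have := Nat.one_le_two_pow (n := n)
    rw [pow_succ, pow_succ]
    omega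

theorem reflect_trinomialProd (n : ℕ) :
    reflect (2 ^ (n + 1) - 2) (trinomialProd n) = trinomialProd n := by
  induction n with
  | zero => simp [trinomialProd]
  | succ n ih =>
    have hD : 2 ^ (n + 1 + 1) - 2 = 2 ^ (n + 1) - 2 + 2 * 2 ^ n := by
      have := Nat.one_le_two_pow (n := n)
      rw [pow_succ, pow_succ]
      omega
    rw [trinomialProd_succ, hD, reflect_mul _ _ (natDegree_trinomialProd_le n)
      (natDegree_one_add_X_pow_add_X_pow_le _), ih,
      reflect_one_add_X_pow_add_X_pow]

noncomputable def centralCoeffs (n : ℕ) : Fin 2 → ℤ :=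
  ![(trinomialProd n ^ 2).coeff (2 ^ (n + 1) - 2),
    (trinomialProd n ^ 2).coeff (2 ^ (n + 1) - 2 + 2 ^ n)]

theorem centralCoeffs_zero : centralCoeffs 0 = ![1, 0] := by
  simp [centralCoeffs, trinomialProd, coeff_one]

theorem mulVec_centralCoeffs (n : ℕ) :
    !![3, 4; 1, 2] *ᵥ centralCoeffs n = centralCoeffs (n + 1) := by
  obtain ⟨D, hD⟩ : ∃ D, 2 ^ (n + 1) - 2 = D := ⟨_, rfl⟩
  have h2n := Nat.one_le_two_pow (n := n)
  have hDa : D + 2 = 2 * 2 ^ n := by rw [← hD, pow_succ]; omega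
  have hD' : 2 ^ (n + 1 + 1) - 2 = D + 2 * 2 ^ n := by rw [← hD, pow_succ, pow_succ]; omega
  have hP : (trinomialProd n).natDegree ≤ D := hD ▸ natDegree_trinomialProd_le n
  have hdeg : (trinomialProd n ^ 2).natDegree ≤ D + D := natDegree_pow_le.trans (by omega)
  have hPrefl : reflect D (trinomialProd n) = trinomialProd n := hD ▸ reflect_trinomialProd n
  have hrefl : reflect (D + D) (trinomialProd n ^ 2) = trinomialProd n ^ 2 := by
    rw [sq, reflect_mul _ _ hP hP, hPrefl]
  have hsq : trinomialProd (n + 1) ^ 2 =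
      trinomialProd n ^ 2 * (1 + X ^ (2 ^ n) + X ^ (2 * 2 ^ n)) ^ 2 := by
    rw [trinomialProd_succ, mul_pow]
  have hcenter : (trinomialProd (n + 1) ^ 2).coeff (2 ^ (n + 1 + 1) - 2) =
      3 * (trinomialProd n ^ 2).coeff D + 4 * (trinomialProd n ^ 2).coeff (D + 2 ^ n) := by
    rw [hsq, hD', coeff_mul_one_add_X_pow_add_X_pow_sq_of_reflect_eq hdeg hrefl hDa]
  have hside : (trinomialProd (n + 1) ^ 2).coeff (2 ^ (n + 1 + 1) - 2 + 2 ^ (n + 1)) =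
      (trinomialProd n ^ 2).coeff D + 2 * (trinomialProd n ^ 2).coeff (D + 2 ^ n) := by
    rw [hsq, hD', pow_succ' 2 n, coeff_mul_one_add_X_pow_add_X_pow_sq_of_natDegree_le hdeg hDa]
  rw [Matrix.mulVec_fin_two, centralCoeffs, centralCoeffs, hcenter, hside, hD]
  simp

open Polynomial in
theorem stmt_19 (F : ℕ → ℤ[X]) (ν : ℕ → ℤ) (M : Matrix (Fin 2) (Fin 2) ℤ)
    (hF : ∀ n, F n = ∏ i ∈ Finset.range n, (1 + (X : ℤ[X]) ^ (2 ^ i) + X ^ (2 ^ (i + 1))))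
    (hν : ∀ n, ν n = ∑ k ∈ (F n).support, ((F n).coeff k) ^ 2)
    (hM : M = !![3, 4; 1, 2]) (n : ℕ) :
    (M ^ n).mulVec ![1, 0] 0 = ν n := by
  obtain rfl : F = trinomialProd := funext hF
  subst hM
  rw [hν, sum_coeff_sq_eq_coeff_sq_of_reflect_eq (natDegree_trinomialProd_le n)
    (reflect_trinomialProd n), ← centralCoeffs_zero,
    Matrix.pow_mulVec_of_mulVec_eq_succ mulVec_centralCoeffs]
  rfl
end
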